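/- For any N ≥ 1 and any multi-index μ, the sum over all N-tuples (ν¹,…,ν^N) of multi-indices with ν¹+⋯+ν^N = μ of the multinomial coefficient C(μ; ν¹,…,ν^N) times ∏_{i=1}^N |ν^i|! equals (|μ|+N−1)!/(N−1)!. -/

import Mathlib

open Finset
open scoped Nat

/-! Auxiliary definitions and lemmas -/

private def msize (σ : ℕ →₀ ℕ) : ℕ := σ.sum fun _ n => n

private lemma msize_add (a b : ℕ →₀ ℕ) : msize (a + b) = msize a + msize b :=
  Finsupp.sum_add_index' (fun _ => rfl) (fun _ _ _ => rfl)

private lemma msize_single (a n : ℕ) : msize (Finsupp.single a n) = n :=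
  Finsupp.sum_single_index rfl

private lemma msize_sub {τ μ : ℕ →₀ ℕ} (h : τ ≤ μ) :
    msize (μ - τ) = msize μ - msize τ := by
  have h1 : (μ - τ) + τ = μ := tsub_add_cancel_of_le h
  have h2 : msize (μ - τ) + msize τ = msize μ := by rw [← msize_add, h1]
  omega

private lemma multinomial_fin_cons (N : ℕ) (x : ℕ) (v : Fin N → ℕ) :
    Nat.multinomial Finset.univ (Fin.cons x v) =
      (x + ∑ i, v i).choose x * Nat.multinomial Finset.univ v := by
  have h1 : (∏ i : Fin (N+1), Nat.factorial ((Fin.cons x v : Fin (N+1) → ℕ) i))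
      = x ! * ∏ i : Fin N, (v i)! := by
    rw [Fin.prod_univ_succ]; simp
  have h2 : (∑ i : Fin (N+1), (Fin.cons x v : Fin (N+1) → ℕ) i) = x + ∑ i, v i := by
    rw [Fin.sum_univ_succ]; simp
  have hs := Nat.multinomial_spec Finset.univ (Fin.cons x v)
  rw [h1, h2] at hs
  have hs2 := Nat.multinomial_spec Finset.univ v
  have h3 : (x + ∑ i, v i).choose x * x ! * (∑ i, v i)! = (x + ∑ i, v i)! := by
    rw [add_comm x (∑ i, v i), Nat.mul_right_comm]
    exact Nat.add_choose_mul_factorial_mul_factorial _ _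
  have key : (x ! * ∏ i : Fin N, (v i)!) *
      ((x + ∑ i, v i).choose x * Nat.multinomial Finset.univ v) = (x + ∑ i, v i)! := by
    calc (x ! * ∏ i : Fin N, (v i)!) *
          ((x + ∑ i, v i).choose x * Nat.multinomial Finset.univ v)
        = (x + ∑ i, v i).choose x * x ! *
            ((∏ i : Fin N, (v i)!) * Nat.multinomial Finset.univ v) := by ring
      _ = (x + ∑ i, v i).choose x * x ! * (∑ i, v i)! := by rw [hs2]
      _ = (x + ∑ i, v i)! := h3
  have hpos : 0 < x ! * ∏ i : Fin N, (v i)! :=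
    Nat.mul_pos (Nat.factorial_pos x) (Finset.prod_pos fun i _ => Nat.factorial_pos _)
  exact Nat.eq_of_mul_eq_mul_left hpos (hs.trans key.symm)

private lemma multinomial_eq_one_of_zero {α : Type*} (s : Finset α) (v : α → ℕ)
    (h : ∀ i ∈ s, v i = 0) : Nat.multinomial s v = 1 := by
  unfold Nat.multinomial
  rw [Finset.sum_congr rfl h, Finset.prod_congr rfl (fun i hi => by rw [h i hi])]
  simp

/-- Weighted Vandermonde identity. -/
private lemma vandermonde_weighted (n b : ℕ) (f : ℕ → ℕ) :
    ∑ k ∈ range (n+1), ∑ t ∈ range (b+1), n.choose k * (b.choose t * f (k + t))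
      = ∑ m ∈ range (n + b + 1), (n + b).choose m * f m := by
  have hL : ∑ k ∈ range (n+1), ∑ t ∈ range (b+1), n.choose k * (b.choose t * f (k + t))
      = ∑ p ∈ range (n+1) ×ˢ range (b+1), n.choose p.1 * (b.choose p.2 * f (p.1 + p.2)) :=
    (Finset.sum_product (range (n+1)) (range (b+1))
      (fun p => n.choose p.1 * (b.choose p.2 * f (p.1 + p.2)))).symm
  rw [hL]
  have hR : ∀ m ∈ range (n+b+1), (n+b).choose m * f m
      = ∑ ij ∈ Finset.HasAntidiagonal.antidiagonal m, n.choose ij.1 * (b.choose ij.2 * f (ij.1 + ij.2)) := by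
    intro m _
    rw [Nat.add_choose_eq, Finset.sum_mul]
    refine Finset.sum_congr rfl fun ij hij => ?_
    rw [Finset.HasAntidiagonal.mem_antidiagonal] at hij
    rw [hij, mul_assoc]
  rw [Finset.sum_congr rfl hR, Finset.sum_sigma']
  refine (Finset.sum_bij_ne_zero (fun a _ _ => a.2) ?_ ?_ ?_ ?_).symm
  · rintro ⟨m, k, t⟩ h₁ h₂
    rw [Finset.mem_sigma, Finset.mem_range, Finset.HasAntidiagonal.mem_antidiagonal] at h₁
    simp only [Finset.mem_product, Finset.mem_range]
    constructor
    · have : n.choose k ≠ 0 := by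
        intro h0; exact h₂ (by simp [h0])
      have := Nat.choose_eq_zero_iff.not.mp this
      omega
    · have : b.choose t ≠ 0 := by
        intro h0; exact h₂ (by simp [h0])
      have := Nat.choose_eq_zero_iff.not.mp this
      omega
  · rintro ⟨m₁, p₁⟩ h₁₁ _ ⟨m₂, p₂⟩ h₂₁ _ (h : p₁ = p₂)
    rw [Finset.mem_sigma, Finset.HasAntidiagonal.mem_antidiagonal] at h₁₁ h₂₁
    subst h
    obtain ⟨_, e1⟩ := h₁₁
    obtain ⟨_, e2⟩ := h₂₁
    have e1' : p₁.1 + p₁.2 = m₁ := e1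
    have e2' : p₁.1 + p₁.2 = m₂ := e2
    have : m₁ = m₂ := by omega
    subst this
    rfl
  · rintro ⟨k, t⟩ hb hne
    rw [Finset.mem_product, Finset.mem_range, Finset.mem_range] at hb
    refine ⟨⟨k + t, (k, t)⟩, ?_, ?_, rfl⟩
    · rw [Finset.mem_sigma, Finset.mem_range, Finset.HasAntidiagonal.mem_antidiagonal]
      exact ⟨by show k + t < n + b + 1; omega, rfl⟩
    · exact hne
  · intro a h₁ h₂; rfl

/-- Multi-index weighted Vandermonde. -/
private lemma finsupp_vandermonde (μ : ℕ →₀ ℕ) (f : ℕ → ℕ) :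
    ∑ τ ∈ Finset.Iic μ, (∏ j ∈ μ.support, (μ j).choose (τ j)) * f (msize τ)
      = ∑ k ∈ range (msize μ + 1), (msize μ).choose k * f k := by
  induction μ using Finsupp.induction generalizing f with
  | zero =>
      have h : (Finset.Iic (0 : ℕ →₀ ℕ)) = {0} := by
        ext τ; simp [le_zero_iff]
      have h0 : msize (0 : ℕ →₀ ℕ) = 0 := rfl
      simp [h, h0]
  | single_add a b μ ha hb ih =>
      have hμa : μ a = 0 := Finsupp.notMem_support_iff.mp ha
      have hsupp : (Finsupp.single a b + μ).support = insert a μ.support := by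
        rw [Finsupp.support_add_eq (by rw [Finsupp.support_single_ne_zero _ hb]; simpa using ha),
          Finsupp.support_single_ne_zero _ hb, ← Finset.insert_eq]
      have happa : (Finsupp.single a b + μ) a = b := by
        simp [hμa]
      have happ : ∀ j ∈ μ.support, (Finsupp.single a b + μ) j = μ j := by
        intro j hj
        have hne : a ≠ j := fun h => ha (h ▸ hj)
        simp [Finsupp.single_eq_of_ne' hne]
      -- reindex `Iic (single a b + μ)` by `range (b+1) ×ˢ Iic μ`
      have step1 : ∑ τ ∈ Finset.Iic (Finsupp.single a b + μ),
            (∏ j ∈ (Finsupp.single a b + μ).support,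
              ((Finsupp.single a b + μ) j).choose (τ j)) * f (msize τ)
          = ∑ p ∈ range (b+1) ×ˢ Finset.Iic μ,
              (∏ j ∈ μ.support, (μ j).choose (p.2 j)) *
                (b.choose p.1 * f (msize p.2 + p.1)) := by
        refine Finset.sum_nbij' (fun τ => (τ a, Finsupp.erase a τ))
          (fun p => Finsupp.single a p.1 + p.2) ?_ ?_ ?_ ?_ ?_
        · intro τ hτ
          rw [Finset.mem_Iic, Finsupp.le_def] at hτ
          rw [Finset.mem_product, Finset.mem_range, Finset.mem_Iic]
          constructor
          · have := hτ a; rw [happa] at this; omega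
          · rw [Finsupp.le_def]
            intro j
            by_cases hj : j = a
            · subst hj; simp
            · have := hτ j
              rw [Finsupp.erase_ne hj]
              rwa [Finsupp.add_apply, Finsupp.single_eq_of_ne' (Ne.symm hj), zero_add] at this
        · intro p hp
          rw [Finset.mem_product, Finset.mem_range, Finset.mem_Iic] at hp
          obtain ⟨hp1, hp2⟩ := hp
          rw [Finset.mem_Iic, Finsupp.le_def]
          intro j
          by_cases hj : j = a
          · subst hj
            have : p.2 j ≤ μ j := Finsupp.le_def.mp hp2 j
            simp only [Finsupp.add_apply, Finsupp.single_eq_same]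
            omega
          · have : p.2 j ≤ μ j := Finsupp.le_def.mp hp2 j
            simp only [Finsupp.add_apply, Finsupp.single_eq_of_ne' (Ne.symm hj), zero_add]
            exact this
        · intro τ _
          dsimp only
          exact Finsupp.single_add_erase a τ
        · intro p hp
          rw [Finset.mem_product, Finset.mem_range, Finset.mem_Iic] at hp
          obtain ⟨_, hp2⟩ := hp
          have hpa : p.2 a = 0 := by
            have := Finsupp.le_def.mp hp2 a; omega
          have h1 : (Finsupp.single a p.1 + p.2) a = p.1 := by simp [hpa]
          have h2 : Finsupp.erase a (Finsupp.single a p.1 + p.2) = p.2 := by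
            rw [Finsupp.erase_add, Finsupp.erase_single,
              Finsupp.erase_of_notMem_support (by simp [Finsupp.mem_support_iff, hpa]), zero_add]
          rw [h1, h2]
        · intro τ hτ
          dsimp only
          rw [Finset.mem_Iic] at hτ
          have hmsize : msize τ = msize (Finsupp.erase a τ) + τ a := by
            conv_lhs => rw [← Finsupp.single_add_erase a τ]
            rw [msize_add, msize_single, add_comm]
          rw [hsupp, Finset.prod_insert ha, happa]
          have hprod : ∏ j ∈ μ.support, ((Finsupp.single a b + μ) j).choose (τ j)
              = ∏ j ∈ μ.support, (μ j).choose ((Finsupp.erase a τ) j) := by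
            refine Finset.prod_congr rfl fun j hj => ?_
            have hne : j ≠ a := fun h => ha (h ▸ hj)
            rw [happ j hj, Finsupp.erase_ne hne]
          rw [hprod, hmsize]
          ring
      rw [step1, Finset.sum_product, Finset.sum_comm]
      have step2 : ∑ σ ∈ Finset.Iic μ, ∑ t ∈ range (b+1),
            (∏ j ∈ μ.support, (μ j).choose (σ j)) * (b.choose t * f (msize σ + t))
          = ∑ σ ∈ Finset.Iic μ, (∏ j ∈ μ.support, (μ j).choose (σ j)) *
              (∑ t ∈ range (b+1), b.choose t * f (msize σ + t)) := by
        refine Finset.sum_congr rfl fun σ _ => ?_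
        rw [Finset.mul_sum]
      rw [step2, ih (fun s => ∑ t ∈ range (b+1), b.choose t * f (s + t))]
      have step3 : ∑ k ∈ range (msize μ + 1), (msize μ).choose k *
            ∑ t ∈ range (b+1), b.choose t * f (k + t)
          = ∑ k ∈ range (msize μ + 1), ∑ t ∈ range (b+1),
              (msize μ).choose k * (b.choose t * f (k + t)) := by
        refine Finset.sum_congr rfl fun k _ => ?_
        rw [Finset.mul_sum]
      rw [step3, vandermonde_weighted (msize μ) b f]
      rw [msize_add, msize_single, add_comm b (msize μ)]

private lemma hockey (N : ℕ) : ∀ n : ℕ,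
    ∑ m ∈ range (n+1), (m + N).choose N = (n + N + 1).choose (N + 1) := by
  intro n
  induction n with
  | zero => simp
  | succ n ih =>
      rw [Finset.sum_range_succ, ih]
      have h : n + 1 + N + 1 = (n + N + 1) + 1 := by omega
      rw [h, Nat.choose_succ_succ (n + N + 1) N]
      have h2 : n + 1 + N = n + N + 1 := by omega
      rw [h2, add_comm]

private lemma scalar_step (n N : ℕ) :
    (N+1) * ∑ k ∈ range (n+1), n.choose k * (k ! * (n - k + N)!) = (n + (N+1))! := by
  have hterm : ∀ k ∈ range (n+1), n.choose k * (k ! * (n - k + N)!)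
      = (n ! * N !) * (n - k + N).choose N := by
    intro k hk
    rw [Finset.mem_range, Nat.lt_succ_iff] at hk
    have h1 := Nat.choose_mul_factorial_mul_factorial hk
    have h2 := Nat.add_choose_mul_factorial_mul_factorial (n - k) N
    calc n.choose k * (k ! * (n - k + N)!)
        = n.choose k * (k ! * ((n - k + N).choose N * (n - k)! * N !)) := by rw [h2]
      _ = (n.choose k * k ! * (n - k)!) * N ! * (n - k + N).choose N := by ring
      _ = (n ! * N !) * (n - k + N).choose N := by rw [h1]
  rw [Finset.sum_congr rfl hterm, ← Finset.mul_sum]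
  have hrefl : ∑ j ∈ range (n+1), (n - j + N).choose N
      = ∑ j ∈ range (n+1), (j + N).choose N := by
    rw [← Finset.sum_range_reflect (fun k => (n - k + N).choose N) (n+1)]
    refine Finset.sum_congr rfl fun j hj => ?_
    rw [Finset.mem_range] at hj
    congr 2
    omega
  rw [hrefl, hockey N n]
  have hle : N + 1 ≤ n + N + 1 := by omega
  have h3 := Nat.choose_mul_factorial_mul_factorial hle
  have h4 : n + N + 1 - (N + 1) = n := by omega
  rw [h4] at h3
  calc (N+1) * (n ! * N ! * (n + N + 1).choose (N + 1))
      = (n + N + 1).choose (N + 1) * ((N+1) * N !) * n ! := by ring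
    _ = (n + N + 1).choose (N + 1) * (N + 1)! * n ! := by rw [Nat.factorial_succ]
    _ = (n + N + 1)! := h3
    _ = (n + (N+1))! := rfl

/-! The sum under consideration. -/

private noncomputable def S (N : ℕ) (μ : ℕ →₀ ℕ) : ℕ :=
  ∑ ν ∈ (Fintype.piFinset fun _ : Fin N => Finset.Iic μ).filter
      (fun ν => ∑ i, ν i = μ),
    (∏ j ∈ μ.support, Nat.multinomial Finset.univ (fun i : Fin N => ν i j)) *
      ∏ i, Nat.factorial ((ν i).sum fun _ n => n)

private lemma S_one (μ : ℕ →₀ ℕ) : S 1 μ = (msize μ)! := by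
  have hset : (Fintype.piFinset fun _ : Fin 1 => Finset.Iic μ).filter
      (fun ν => ∑ i, ν i = μ) = {fun _ => μ} := by
    ext ν
    simp only [Finset.mem_filter, Fintype.mem_piFinset, Finset.mem_Iic, Fin.sum_univ_one,
      Finset.mem_singleton]
    constructor
    · rintro ⟨_, h⟩
      funext i
      have hi : i = 0 := Subsingleton.elim _ _
      rw [hi, h]
    · rintro rfl
      exact ⟨fun i => le_refl μ, rfl⟩
  rw [S, hset, Finset.sum_singleton]
  simp [msize]

private lemma S_succ (N : ℕ) (μ : ℕ →₀ ℕ) :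
    S (N+1) μ = ∑ τ ∈ Finset.Iic μ,
      (∏ j ∈ μ.support, (μ j).choose (τ j)) * ((msize τ)! * S N (μ - τ)) := by
  have hRHS : ∑ τ ∈ Finset.Iic μ,
      (∏ j ∈ μ.support, (μ j).choose (τ j)) * ((msize τ)! * S N (μ - τ))
    = ∑ x ∈ (Finset.Iic μ).sigma (fun τ =>
        (Fintype.piFinset fun _ : Fin N => Finset.Iic (μ - τ)).filter
          (fun ρ => ∑ i, ρ i = μ - τ)),
        (∏ j ∈ μ.support, (μ j).choose (x.1 j)) * ((msize x.1)! *
          ((∏ j ∈ (μ - x.1).support,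
              Nat.multinomial Finset.univ (fun i : Fin N => x.2 i j)) *
            ∏ i, Nat.factorial ((x.2 i).sum fun _ n => n))) := by
    rw [Finset.sum_sigma]
    refine Finset.sum_congr rfl fun τ _ => ?_
    rw [S, Finset.mul_sum, Finset.mul_sum]
  rw [hRHS, S]
  refine Finset.sum_nbij' (fun ν => ⟨ν 0, Fin.tail ν⟩)
    (fun x => Fin.cons x.1 x.2) ?_ ?_ ?_ ?_ ?_
  · intro ν hν
    rw [Finset.mem_filter, Fintype.mem_piFinset] at hν
    obtain ⟨hmem, hsum⟩ := hν
    have hsplit : ν 0 + ∑ i : Fin N, ν i.succ = μ := by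
      rw [← Fin.sum_univ_succ]; exact hsum
    have htail : ∑ i : Fin N, ν i.succ = μ - ν 0 := by
      have : (∑ i : Fin N, ν i.succ) + ν 0 = μ := by rw [add_comm]; exact hsplit
      exact eq_tsub_of_add_eq this
    rw [Finset.mem_sigma, Finset.mem_Iic, Finset.mem_filter, Fintype.mem_piFinset]
    refine ⟨Finset.mem_Iic.mp (hmem 0), fun i => ?_, ?_⟩
    · rw [Finset.mem_Iic]
      calc (Fin.tail ν) i = ν i.succ := rfl
        _ ≤ ∑ i : Fin N, ν i.succ :=
            Finset.single_le_sum (f := fun i : Fin N => ν i.succ)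
              (fun _ _ => zero_le) (Finset.mem_univ i)
        _ = μ - ν 0 := htail
    · show ∑ i : Fin N, ν i.succ = μ - ν 0
      exact htail
  · rintro ⟨τ, ρ⟩ hx
    dsimp only
    rw [Finset.mem_sigma, Finset.mem_Iic, Finset.mem_filter, Fintype.mem_piFinset] at hx
    obtain ⟨hτ, hρ, hsum⟩ := hx
    rw [Finset.mem_filter, Fintype.mem_piFinset]
    constructor
    · intro i
      rw [Finset.mem_Iic]
      refine Fin.cases ?_ ?_ i
      · rw [Fin.cons_zero]; exact hτ
      · intro i
        rw [Fin.cons_succ]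
        exact le_trans (Finset.mem_Iic.mp (hρ i)) tsub_le_self
    · rw [Fin.sum_univ_succ, Fin.cons_zero]
      simp only [Fin.cons_succ]
      rw [hsum, add_tsub_cancel_of_le hτ]
  · intro ν _
    dsimp only
    exact Fin.cons_self_tail ν
  · rintro ⟨τ, ρ⟩ _
    dsimp only
    simp [Fin.tail_cons]
  · intro ν hν
    dsimp only
    rw [Finset.mem_filter, Fintype.mem_piFinset] at hν
    obtain ⟨hmem, hsum⟩ := hν
    have hsplit : ν 0 + ∑ i : Fin N, ν i.succ = μ := by
      rw [← Fin.sum_univ_succ]; exact hsum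
    have htail : ∑ i : Fin N, ν i.succ = μ - ν 0 := by
      have : (∑ i : Fin N, ν i.succ) + ν 0 = μ := by rw [add_comm]; exact hsplit
      exact eq_tsub_of_add_eq this
    -- the multinomial factor splits
    have hmult : ∀ j, Nat.multinomial Finset.univ (fun i : Fin (N+1) => ν i j)
        = (μ j).choose (ν 0 j) *
          Nat.multinomial Finset.univ (fun i : Fin N => ν i.succ j) := by
      intro j
      have hfun : (fun i : Fin (N+1) => ν i j)
          = Fin.cons (ν 0 j) (fun i : Fin N => ν i.succ j) := by
        funext i
        refine Fin.cases ?_ ?_ i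
        · rw [Fin.cons_zero]
        · intro i; rw [Fin.cons_succ]
      rw [hfun, multinomial_fin_cons]
      congr 2
      have : (∑ i : Fin (N+1), ν i) j = μ j := by rw [hsum]
      rw [Finset.sum_apply' j, Fin.sum_univ_succ] at this
      exact this
    have hprod1 : ∏ j ∈ μ.support, Nat.multinomial Finset.univ (fun i : Fin (N+1) => ν i j)
        = (∏ j ∈ μ.support, (μ j).choose (ν 0 j)) *
          ∏ j ∈ μ.support, Nat.multinomial Finset.univ (fun i : Fin N => ν i.succ j) := by
      rw [← Finset.prod_mul_distrib]
      exact Finset.prod_congr rfl fun j _ => hmult j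
    have hprod2 : ∏ j ∈ μ.support, Nat.multinomial Finset.univ (fun i : Fin N => ν i.succ j)
        = ∏ j ∈ (μ - ν 0).support,
            Nat.multinomial Finset.univ (fun i : Fin N => ν i.succ j) := by
      refine (Finset.prod_subset Finsupp.support_tsub fun j _ hj => ?_).symm
      refine multinomial_eq_one_of_zero _ _ fun i _ => ?_
      have hz : (μ - ν 0) j = 0 := Finsupp.notMem_support_iff.mp hj
      have hsz : ∑ i : Fin N, ν i.succ j = 0 := by
        have := congrArg (fun σ : ℕ →₀ ℕ => σ j) htail
        simpa [Finset.sum_apply', hz] using this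
      exact Finset.sum_eq_zero_iff.mp hsz i (Finset.mem_univ i)
    have hfact : ∏ i : Fin (N+1), Nat.factorial ((ν i).sum fun _ n => n)
        = Nat.factorial ((ν 0).sum fun _ n => n) *
          ∏ i : Fin N, Nat.factorial ((ν i.succ).sum fun _ n => n) := by
      rw [Fin.prod_univ_succ]
    rw [hprod1, hprod2, hfact]
    show _ = (∏ j ∈ μ.support, (μ j).choose (ν 0 j)) * ((msize (ν 0))! *
      ((∏ j ∈ (μ - ν 0).support,
          Nat.multinomial Finset.univ (fun i : Fin N => (Fin.tail ν) i j)) *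
        ∏ i : Fin N, Nat.factorial (((Fin.tail ν) i).sum fun _ n => n)))
    have htl : ∀ i : Fin N, (Fin.tail ν) i = ν i.succ := fun i => rfl
    simp only [htl]
    show (∏ j ∈ μ.support, (μ j).choose (ν 0 j)) *
        (∏ j ∈ (μ - ν 0).support,
          Nat.multinomial Finset.univ (fun i : Fin N => ν i.succ j)) *
        ((msize (ν 0))! * ∏ i : Fin N, Nat.factorial ((ν i.succ).sum fun _ n => n)) = _
    ring

private lemma S_mul_factorial (N : ℕ) : ∀ μ : ℕ →₀ ℕ, S (N+1) μ * N ! = (msize μ + N)! := by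
  induction N with
  | zero =>
      intro μ
      rw [S_one]
      simp
  | succ N ih =>
      intro μ
      rw [S_succ]
      have hterm : ∀ τ ∈ Finset.Iic μ,
          ((∏ j ∈ μ.support, (μ j).choose (τ j)) * ((msize τ)! * S (N+1) (μ - τ))) * (N+1)!
          = (N+1) * ((∏ j ∈ μ.support, (μ j).choose (τ j)) *
              ((msize τ)! * (msize μ - msize τ + N)!)) := by
        intro τ hτ
        rw [Finset.mem_Iic] at hτ
        have h1 : S (N+1) (μ - τ) * N ! = (msize (μ - τ) + N)! := ih (μ - τ)
        rw [msize_sub hτ] at h1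
        calc ((∏ j ∈ μ.support, (μ j).choose (τ j)) * ((msize τ)! * S (N+1) (μ - τ))) * (N+1)!
            = ((∏ j ∈ μ.support, (μ j).choose (τ j)) * ((msize τ)! * S (N+1) (μ - τ))) *
                ((N+1) * N !) := by rw [Nat.factorial_succ]
          _ = (N+1) * ((∏ j ∈ μ.support, (μ j).choose (τ j)) *
                ((msize τ)! * (S (N+1) (μ - τ) * N !))) := by ring
          _ = _ := by rw [h1]
      rw [Finset.sum_mul, Finset.sum_congr rfl hterm, ← Finset.mul_sum]
      rw [finsupp_vandermonde μ (fun k => k ! * (msize μ - k + N)!)]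
      exact scalar_step (msize μ) N

/-- General multinomial summation lemma: for any `N ≥ 1` and multi-index `μ`,
`∑_{ν¹+⋯+ν^N=μ} C(μ;ν¹,…,ν^N) ∏_{i=1}^N |ν^i|! = (|μ|+N−1)!/(N−1)!`, where
`C(μ;ν¹,…,ν^N) = ∏_j μ_j!/(ν¹_j!⋯ν^N_j!)`. -/
theorem multi_index_multinomial_factorial_sum (N : ℕ) (hN : 1 ≤ N) (μ : ℕ →₀ ℕ) :
    ∑ ν ∈ (Fintype.piFinset fun _ : Fin N => Finset.Iic μ).filter
        (fun ν => ∑ i, ν i = μ),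
      (∏ j ∈ μ.support, Nat.multinomial Finset.univ (fun i : Fin N => ν i j)) *
        ∏ i, Nat.factorial ((ν i).sum fun _ n => n)
      = Nat.factorial ((μ.sum fun _ n => n) + N - 1) / Nat.factorial (N - 1) := by
  obtain ⟨M, rfl⟩ : ∃ M, N = M + 1 := ⟨N - 1, by omega⟩
  have h := S_mul_factorial M μ
  show S (M+1) μ = Nat.factorial ((μ.sum fun _ n => n) + (M+1) - 1) / Nat.factorial ((M+1) - 1)
  have h1 : (μ.sum fun _ n => n) + (M+1) - 1 = msize μ + M := by
    unfold msize; omega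
  have h2 : (M+1) - 1 = M := rfl
  rw [h1, h2]
  exact (Nat.div_eq_of_eq_mul_left (Nat.factorial_pos M) h.symm).symm
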